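/- arXiv:1312.7836 — 2 statements merged into one kernel-verified Lean document; each statement's English description precedes it below -/
import Mathlib

section
/- Let R be a commutative noetherian ring, J an ideal of R, and I ⊆ J an ideal. Then I is a reduction of J (i.e., I·Jⁿ = J^{n+1} for some n ≥ 0) if and only if the Rees algebra R[Jt] = ⊕ₙ Jⁿ is a finite module over the subalgebra R[It] = ⊕ₙ Iⁿ. -/
/-!
Write `A = R[It] ⊆ B = R[Jt]` and `B≤n` for the `R`-submodule of elements of `B` of degree at
most `n`. Over a noetherian ring `B≤n` is a finitely generated `R`-module, so `B` is a finite
`A`-module iff `B = A · B≤n` for some `n`. If `I Jⁿ = J^{n+1}`, then `J^{n+k} = I^k Jⁿ`, so every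
monomial of degree `n + k` in `B` lies in `A · B≤n`. Conversely, the coefficient of degree `n + 1`
of every element of `A · B≤n` lies in `I Jⁿ`, because `I^i J^j ⊆ I J^{i+j-1}` for `i ≥ 1`.
-/

open Polynomial

theorem pow_add_eq_pow_mul_of_mul_pow_eq_pow_succ {M : Type*} [CommMonoid M] {a b : M} {n : ℕ}
    (h : a * b ^ n = b ^ (n + 1)) (k : ℕ) : b ^ (n + k) = a ^ k * b ^ n := by
  induction k with
  | zero => simp
  | succ k ih => rw [← add_assoc, pow_succ, ih, mul_assoc, ← pow_succ, ← h, pow_succ, mul_assoc]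

namespace Ideal

variable {R : Type*} [CommRing R] {I J : Ideal R}

theorem pow_succ_mul_pow_le (hIJ : I ≤ J) (i j : ℕ) : I ^ (i + 1) * J ^ j ≤ I * J ^ (i + j) := by
  rw [pow_succ', mul_assoc, pow_add]
  exact mul_mono_right (mul_mono_left (pow_right_mono hIJ i))

end Ideal

namespace Subalgebra

variable {R : Type*} [CommRing R]

noncomputable def degreeLE (B : Subalgebra R R[X]) (n : ℕ) : Submodule R B :=
  (Polynomial.degreeLE R n).comap B.val.toLinearMap

variable {B : Subalgebra R R[X]} {n : ℕ}

theorem mem_degreeLE {b : B} : b ∈ B.degreeLE n ↔ (b : R[X]).degree ≤ n := Polynomial.mem_degreeLE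

theorem fg_degreeLE [IsNoetherianRing R] (B : Subalgebra R R[X]) (n : ℕ) : (B.degreeLE n).FG := by
  classical
  refine Submodule.fg_of_fg_map_injective B.val.toLinearMap Subtype.val_injective ?_
  exact Submodule.FG.of_le ⟨_, degreeLE_eq_span_X_pow.symm⟩ (Submodule.map_comap_le _ _)

theorem module_finite_iff_exists_span_degreeLE_eq_top [IsNoetherianRing R] {A : Type*}
    [CommSemiring A] [Algebra R A] [Module A B] [IsScalarTower R A B] :
    Module.Finite A B ↔ ∃ n, Submodule.span A (B.degreeLE n : Set B) = ⊤ := by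
  constructor
  · rintro ⟨T, hT⟩
    obtain ⟨n, hn⟩ := span_le_degreeLE_of_finite ((T.finite_toSet).image (Subtype.val : B → R[X]))
    refine ⟨n, top_le_iff.mp (hT ▸ Submodule.span_mono fun t ht => ?_)⟩
    exact hn (Submodule.subset_span ⟨t, ht, rfl⟩)
  · rintro ⟨n, hn⟩
    exact ⟨hn ▸ (B.fg_degreeLE n).span (A := A)⟩

end Subalgebra

namespace reesAlgebra

variable {R : Type*} [CommRing R] {I J : Ideal R}

theorem coeff_succ_mul_mem (hIJ : I ≤ J) {n : ℕ} {c p : R[X]} (hc : c ∈ reesAlgebra I)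
    (hp : p ∈ reesAlgebra J) (hpn : p.coeff (n + 1) ∈ I * J ^ n) :
    (c * p).coeff (n + 1) ∈ I * J ^ n := by
  rw [coeff_mul]
  refine Submodule.sum_mem _ fun ⟨i, j⟩ hij => ?_
  rw [Finset.HasAntidiagonal.mem_antidiagonal] at hij
  cases i with
  | zero =>
    obtain rfl : j = n + 1 := by omega
    exact Ideal.mul_mem_left _ _ hpn
  | succ i =>
    have := Ideal.pow_succ_mul_pow_le hIJ i j (Ideal.mul_mem_mul (hc (i + 1)) (hp j))
    rwa [show i + j = n by omega] at this

variable [Algebra (reesAlgebra I) (reesAlgebra J)]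
  [IsScalarTower (reesAlgebra I) (reesAlgebra J) R[X]]

theorem coe_smul (c : reesAlgebra I) (b : reesAlgebra J) :
    ((c • b : reesAlgebra J) : R[X]) = c * b := by
  simpa only [Subalgebra.smul_def, smul_eq_mul, mul_one] using smul_assoc c b (1 : R[X])

theorem span_degreeLE_eq_top_of_mul_pow_eq {n : ℕ} (h : I * J ^ n = J ^ (n + 1)) :
    Submodule.span (reesAlgebra I) ((reesAlgebra J).degreeLE n : Set (reesAlgebra J)) = ⊤ := by
  set N := Submodule.span (reesAlgebra I) ((reesAlgebra J).degreeLE n : Set (reesAlgebra J))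
  have monomial_mem_degreeLE : ∀ {m r} (hr : r ∈ J ^ m), m ≤ n →
      ⟨monomial m r, monomial_mem.mpr hr⟩ ∈ (reesAlgebra J).degreeLE n := fun _ hm =>
    Subalgebra.mem_degreeLE.mpr (degree_monomial_le _ _ |>.trans (by exact_mod_cast hm))
  have hmonomial : ∀ m, ∀ r ∈ J ^ m, monomial m r ∈ N.toAddSubmonoid.map (reesAlgebra J).val := by
    intro m r hr
    obtain hm | ⟨k, rfl⟩ : m ≤ n ∨ ∃ k, m = n + k :=
      (le_or_gt m n).imp_right fun hm => ⟨m - n, by omega⟩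
    · exact ⟨_, Submodule.subset_span (monomial_mem_degreeLE hr hm), rfl⟩
    rw [pow_add_eq_pow_mul_of_mul_pow_eq_pow_succ h k] at hr
    refine Submodule.mul_induction_on hr (fun a ha c hc => ?_) fun x y hx hy => ?_
    · refine ⟨⟨monomial k a, monomial_mem.mpr ha⟩ • ⟨monomial n c, monomial_mem.mpr hc⟩,
        N.smul_mem _ (Submodule.subset_span (monomial_mem_degreeLE hc le_rfl)), ?_⟩
      simp [coe_smul, monomial_mul_monomial, add_comm k n]
    · rw [map_add]
      exact add_mem hx hy
  refine Submodule.eq_top_iff'.mpr fun b => ?_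
  obtain ⟨b', hb', hbb'⟩ : (b : R[X]) ∈ N.toAddSubmonoid.map (reesAlgebra J).val := by
    rw [← (b : R[X]).sum_monomial_eq]
    exact AddSubmonoid.sum_mem _ fun m _ => hmonomial m _ (b.2 m)
  rwa [Subtype.val_injective hbb'] at hb'

theorem coeff_succ_mem_of_mem_span_degreeLE (hIJ : I ≤ J) {n : ℕ} {b : reesAlgebra J}
    (hb : b ∈ Submodule.span (reesAlgebra I) ((reesAlgebra J).degreeLE n : Set (reesAlgebra J))) :
    (b : R[X]).coeff (n + 1) ∈ I * J ^ n := by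
  induction hb using Submodule.span_induction with
  | mem b hb =>
    rw [coeff_eq_zero_of_degree_lt (Subalgebra.mem_degreeLE.mp hb |>.trans_lt
      (by exact_mod_cast n.lt_succ_self))]
    exact zero_mem _
  | zero => simp
  | add x y _ _ hx hy => simpa using add_mem hx hy
  | smul c x _ hx => rw [coe_smul]; exact coeff_succ_mul_mem hIJ c.2 x.2 hx

theorem pow_succ_le_mul_pow_of_span_degreeLE_eq_top (hIJ : I ≤ J) {n : ℕ}
    (h : Submodule.span (reesAlgebra I) ((reesAlgebra J).degreeLE n : Set (reesAlgebra J)) = ⊤) :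
    J ^ (n + 1) ≤ I * J ^ n := by
  intro x hx
  have hmem : (⟨monomial (n + 1) x, monomial_mem.mpr hx⟩ : reesAlgebra J) ∈
      Submodule.span (reesAlgebra I) ((reesAlgebra J).degreeLE n : Set (reesAlgebra J)) :=
    h ▸ Submodule.mem_top
  simpa using coeff_succ_mem_of_mem_span_degreeLE hIJ hmem

end reesAlgebra

/-- `I ⊆ J` is a reduction of `J` (i.e. `I·Jⁿ = J^{n+1}` for some `n`)
iff the Rees algebra of `J` is a finite module over the Rees algebra of `I`. -/
theorem reduction_iff_reesAlgebra_finite {R : Type*} [CommRing R] [IsNoetherianRing R]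
    (I J : Ideal R) (hIJ : I ≤ J) (hle : reesAlgebra I ≤ reesAlgebra J) :
    (∃ n : ℕ, I * J ^ n = J ^ (n + 1)) ↔
      (Subalgebra.inclusion hle).toRingHom.Finite := by
  let _ : Algebra (reesAlgebra I) (reesAlgebra J) :=
    (Subalgebra.inclusion hle).toRingHom.toAlgebra
  have : IsScalarTower R (reesAlgebra I) (reesAlgebra J) := .of_algebraMap_eq fun _ => rfl
  have : IsScalarTower (reesAlgebra I) (reesAlgebra J) R[X] := .of_algebraMap_eq fun _ => rfl
  change _ ↔ Module.Finite (reesAlgebra I) (reesAlgebra J)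
  rw [Subalgebra.module_finite_iff_exists_span_degreeLE_eq_top]
  refine exists_congr fun n => ⟨reesAlgebra.span_degreeLE_eq_top_of_mul_pow_eq, fun h => ?_⟩
  refine le_antisymm ?_ (reesAlgebra.pow_succ_le_mul_pow_of_span_degreeLE_eq_top hIJ h)
  exact (Ideal.mul_mono_left hIJ).trans_eq (pow_succ' J n).symm
end

section
/- Let k be a field and let G ∈ k[Y₁,…,Yₙ] be a homogeneous Sₙ-invariant polynomial of degree m lying in the subring generated by the differences Yᵢ − Yⱼ. Write G = G(s₁,…,sₙ) as a weighted-homogeneous polynomial in the elementary symmetric polynomials (with sᵢ of weight i). Then for any commutative k-algebra S and monic polynomials f(Z) = Zⁿ + a₁Z^{n−1} + … + aₙ and g(Z₁) = Z₁ⁿ + b₁Z₁^{n−1} + … + bₙ in S[Z] related by the substitution Z₁ = Z − λ for some λ ∈ S (i.e., f(Z) = g(Z − λ)), one has G(a₁,…,aₙ) = G(b₁,…,bₙ) in S. -/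
/-! Every coefficient of the shift `f(Z + λ)` is a polynomial in `λ` and the coefficients of `f`.
So it is enough to prove the identity for the generic monic polynomial
`Zⁿ - X₀Zⁿ⁻¹ + X₁Zⁿ⁻² - ⋯` over `S[X₀, …, Xₙ₋₁]`. Substituting `Xᵢ ↦ eᵢ₊₁(Y)` is injective, and
it sends the generic polynomial to `∏ⱼ (Z - Yⱼ)`, whose shift is `∏ⱼ (Z - (Yⱼ - λ))`. For a split
polynomial, `Ĝ` evaluated at the signed coefficients is `G` evaluated at the roots. Since `G` is
generated by differences of variables, `G(Y - λ) = G(Y)`. -/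

open Polynomial Finset

lemma neg_one_pow_mul_neg_one_pow_mul {R : Type*} [Monoid R] [HasDistribNeg R] (a : ℕ) (x : R) :
    (-1) ^ a * ((-1) ^ a * x) = x := by
  rw [← mul_assoc, ← pow_add, Even.neg_one_pow ⟨a, rfl⟩, one_mul]

section Ring

variable {R R' : Type*} [Ring R] [Ring R']

/-- `(-1)ⁱ⁺¹ aᵢ₊₁` for `p = Zⁿ + a₁Zⁿ⁻¹ + ⋯ + aₙ`: the elementary symmetric function `eᵢ₊₁` of the
roots when `p` splits. -/
def signedCoeff (n : ℕ) (p : R[X]) (i : Fin n) : R :=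
  (-1) ^ ((i : ℕ) + 1) * p.coeff (n - ((i : ℕ) + 1))

noncomputable def monicOfSignedCoeff {n : ℕ} (c : Fin n → R) : R[X] :=
  X ^ n + ∑ i : Fin n, C ((-1) ^ ((i : ℕ) + 1) * c i) * X ^ (n - ((i : ℕ) + 1))

lemma Polynomial.Monic.monicOfSignedCoeff_signedCoeff {n : ℕ} {p : R[X]} (hp : p.Monic)
    (hn : p.natDegree = n) : monicOfSignedCoeff (signedCoeff n p) = p := by
  conv_rhs => rw [hp.as_sum, hn, ← Finset.sum_range_reflect]
  simp only [monicOfSignedCoeff, signedCoeff, neg_one_pow_mul_neg_one_pow_mul, Nat.sub_sub,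
    add_comm 1]
  rw [Fin.sum_univ_eq_sum_range (fun i => C (p.coeff (n - (i + 1))) * X ^ (n - (i + 1)))]

lemma map_monicOfSignedCoeff (φ : R →+* R') {n : ℕ} (c : Fin n → R) :
    (monicOfSignedCoeff c).map φ = monicOfSignedCoeff (φ ∘ c) := by
  simp [monicOfSignedCoeff, Polynomial.map_sum]

lemma signedCoeff_map (φ : R →+* R') (n : ℕ) (p : R[X]) :
    signedCoeff n (p.map φ) = φ ∘ signedCoeff n p := by
  ext i
  simp [signedCoeff]

end Ring

section CommRing

variable {R : Type*} [CommRing R]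

lemma signedCoeff_prod_X_sub_C {n : ℕ} (x : Fin n → R) :
    signedCoeff n (∏ j, (X - C (x j))) = fun i : Fin n => (univ.val.map x).esymm ((i : ℕ) + 1) := by
  ext i
  have hprod : ∏ j, (X - C (x j)) = ((univ.val.map x).map fun t => X - C t).prod := by
    rw [Multiset.map_map]
    rfl
  have hi : n - (n - ((i : ℕ) + 1)) = (i : ℕ) + 1 := by omega
  rw [signedCoeff, hprod, Multiset.prod_X_sub_C_coeff _ (by simp), Multiset.card_map, card_val,
    card_univ, Fintype.card_fin, hi, neg_one_pow_mul_neg_one_pow_mul]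

lemma prod_X_sub_C_comp_X_add_C {ι : Type*} (s : Finset ι) (x : ι → R) (c : R) :
    (∏ j ∈ s, (X - C (x j))).comp (X + C c) = ∏ j ∈ s, (X - C (x j - c)) := by
  simp only [Polynomial.prod_comp, Polynomial.sub_comp, Polynomial.X_comp, Polynomial.C_comp,
    Polynomial.C_sub]
  exact Finset.prod_congr rfl fun j _ => by ring

noncomputable def genericMonic (n : ℕ) (S : Type*) [CommRing S] : (MvPolynomial (Fin n) S)[X] :=
  monicOfSignedCoeff MvPolynomial.X

lemma Polynomial.Monic.map_aeval_signedCoeff_genericMonic {n : ℕ} {f : R[X]} (hf : f.Monic)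
    (hn : f.natDegree = n) :
    (genericMonic n R).map (MvPolynomial.aeval (R := R) (signedCoeff n f) : _ →+* R) = f := by
  rw [genericMonic, map_monicOfSignedCoeff]
  convert hf.monicOfSignedCoeff_signedCoeff hn
  ext i
  simp

end CommRing

lemma aeval_esymm_injective (R : Type*) [CommRing R] (n : ℕ) :
    Function.Injective
      (MvPolynomial.aeval (R := R) fun i : Fin n => MvPolynomial.esymm (Fin n) R ((i : ℕ) + 1)) :=
  fun _ _ h => MvPolynomial.esymmAlgHom_fin_injective R le_rfl <| Subtype.ext <| by
    simpa only [MvPolynomial.esymmAlgHom_apply] using h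

lemma aeval_sub_const_eq_of_mem_adjoin_X_sub_X {k σ A : Type*} [CommRing k] [CommRing A]
    [Algebra k A] {P : MvPolynomial σ k}
    (hP : P ∈ Algebra.adjoin k {h | ∃ i j : σ, h = MvPolynomial.X i - MvPolynomial.X j})
    (x : σ → A) (c : A) : MvPolynomial.aeval (fun j => x j - c) P = MvPolynomial.aeval x P := by
  refine (Algebra.adjoin_le ?_ :
    _ ≤ AlgHom.equalizer (MvPolynomial.aeval fun j => x j - c) (MvPolynomial.aeval x)) hP
  rintro _ ⟨i, j, rfl⟩
  simp

section EvalAtSignedCoeff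

variable {k : Type*} [CommRing k] {n : ℕ} (Q : MvPolynomial (Fin n) k)

lemma aeval_signedCoeff_map {A B : Type*} [CommRing A] [Algebra k A] [CommRing B] [Algebra k B]
    (φ : A →ₐ[k] B) (p : A[X]) :
    MvPolynomial.aeval (signedCoeff n (p.map φ)) Q =
      φ (MvPolynomial.aeval (signedCoeff n p) Q) := by
  rw [signedCoeff_map, MvPolynomial.comp_aeval_apply]
  rfl

lemma aeval_signedCoeff_prod_X_sub_C {A : Type*} [CommRing A] [Algebra k A] (x : Fin n → A) :
    MvPolynomial.aeval (signedCoeff n (∏ j, (X - C (x j)))) Q =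
      MvPolynomial.aeval x
        (MvPolynomial.aeval (fun i : Fin n => MvPolynomial.esymm (Fin n) k ((i : ℕ) + 1)) Q) := by
  simp only [signedCoeff_prod_X_sub_C, MvPolynomial.comp_aeval_apply,
    MvPolynomial.aeval_esymm_eq_multiset_esymm]

lemma aeval_signedCoeff_genericMonic_comp_X_add_C
    (hQ : MvPolynomial.aeval (fun i : Fin n => MvPolynomial.esymm (Fin n) k ((i : ℕ) + 1)) Q ∈
      Algebra.adjoin k {h | ∃ i j : Fin n, h = MvPolynomial.X i - MvPolynomial.X j})
    {S : Type*} [CommRing S] [Algebra k S] (c : S) :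
    MvPolynomial.aeval (signedCoeff n ((genericMonic n S).comp (X + C (MvPolynomial.C c)))) Q =
      MvPolynomial.aeval (signedCoeff n (genericMonic n S)) Q := by
  nontriviality S
  set ρ : MvPolynomial (Fin n) S →ₐ[S] MvPolynomial (Fin n) S :=
    MvPolynomial.aeval fun i : Fin n => MvPolynomial.esymm (Fin n) S ((i : ℕ) + 1)
  have hsplit : (genericMonic n S).map (ρ : MvPolynomial (Fin n) S →+* MvPolynomial (Fin n) S) =
      ∏ j, (X - C (MvPolynomial.X j)) := by
    have hP := (monic_prod_X_sub_C (fun j : Fin n => MvPolynomial.X (R := S) j) univ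
      ).monicOfSignedCoeff_signedCoeff (n := n) (by simp)
    rw [signedCoeff_prod_X_sub_C] at hP
    rw [← hP, genericMonic, map_monicOfSignedCoeff]
    congr 1
    ext i : 1
    simp [ρ, MvPolynomial.esymm_eq_multiset_esymm]
  have hρC : ρ (MvPolynomial.C c) = MvPolynomial.C c := MvPolynomial.aeval_C _ c
  apply aeval_esymm_injective S n
  change ρ.restrictScalars k _ = ρ.restrictScalars k _
  rw [← aeval_signedCoeff_map, ← aeval_signedCoeff_map, Polynomial.map_comp,
    AlgHom.coe_restrictScalars, hsplit, Polynomial.map_add, Polynomial.map_X, Polynomial.map_C,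
    RingHom.coe_coe, hρC, prod_X_sub_C_comp_X_add_C, aeval_signedCoeff_prod_X_sub_C,
    aeval_signedCoeff_prod_X_sub_C, aeval_sub_const_eq_of_mem_adjoin_X_sub_X hQ]

end EvalAtSignedCoeff

theorem diff_invariant_coeff_evaluation_general {k : Type*} [Field k] {n : ℕ}
    (G : MvPolynomial (Fin n) k)
    (hGdiff : G ∈ Algebra.adjoin k
      {h : MvPolynomial (Fin n) k | ∃ i j : Fin n, h = MvPolynomial.X i - MvPolynomial.X j})
    (Ghat : MvPolynomial (Fin n) k)
    (hrep : MvPolynomial.aeval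
      (fun i : Fin n => MvPolynomial.esymm (Fin n) k ((i : ℕ) + 1)) Ghat = G)
    {S : Type*} [CommRing S] [Algebra k S] (lam : S)
    (f : Polynomial S) (hf : f.Monic) (hdeg : f.natDegree = n) :
    MvPolynomial.aeval
        (fun i : Fin n => (-1 : S) ^ ((i : ℕ) + 1) * f.coeff (n - ((i : ℕ) + 1))) Ghat =
      MvPolynomial.aeval
        (fun i : Fin n => (-1 : S) ^ ((i : ℕ) + 1) *
          (f.comp (Polynomial.X + Polynomial.C lam)).coeff (n - ((i : ℕ) + 1))) Ghat := by
  subst hrep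
  set ψ : MvPolynomial (Fin n) S →ₐ[S] S := MvPolynomial.aeval (signedCoeff n f)
  have hψ : (genericMonic n S).map (ψ : MvPolynomial (Fin n) S →+* S) = f :=
    hf.map_aeval_signedCoeff_genericMonic hdeg
  have hψ_comp : ((genericMonic n S).comp (X + C (MvPolynomial.C lam))).map
      (ψ : MvPolynomial (Fin n) S →+* S) = f.comp (X + C lam) := by
    rw [Polynomial.map_comp, hψ, Polynomial.map_add, Polynomial.map_X, Polynomial.map_C,
      RingHom.coe_coe, MvPolynomial.aeval_C, Algebra.algebraMap_self, RingHom.id_apply]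
  change MvPolynomial.aeval (signedCoeff n f) Ghat =
    MvPolynomial.aeval (signedCoeff n (f.comp (X + C lam))) Ghat
  rw [← hψ_comp, ← hψ, ← AlgHom.coe_restrictScalars k ψ, aeval_signedCoeff_map,
    aeval_signedCoeff_map, aeval_signedCoeff_genericMonic_comp_X_add_C Ghat hGdiff]

/-- Let `G` be a homogeneous symmetric polynomial of degree `m` lying in
the subalgebra generated by the differences `Yᵢ - Yⱼ`, and let `Ĝ` be its (weighted
homogeneous) expression in the elementary symmetric polynomials.  Then for any monic
polynomials `f(Z) = Zⁿ + a₁Z^{n-1} + … + aₙ` and `g(Z₁) = f(Z₁ + λ)` over a `k`-algebra `S`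
(i.e. `f(Z) = g(Z - λ)`), evaluating `Ĝ` at the coefficients (with the sign convention
`sᵢ ↦ (-1)ⁱaᵢ`) gives `G(a₁,…,aₙ) = G(b₁,…,bₙ)`. -/
theorem diff_invariant_coeff_evaluation {k : Type*} [Field k] {n m : ℕ}
    (G : MvPolynomial (Fin n) k)
    (hGsym : ∀ σ : Equiv.Perm (Fin n), MvPolynomial.rename σ G = G)
    (hGhom : G.IsHomogeneous m)
    (hGdiff : G ∈ Algebra.adjoin k
      {h : MvPolynomial (Fin n) k | ∃ i j : Fin n, h = MvPolynomial.X i - MvPolynomial.X j})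
    (Ghat : MvPolynomial (Fin n) k)
    (hW : MvPolynomial.IsWeightedHomogeneous (fun i : Fin n => (i : ℕ) + 1) Ghat m)
    (hrep : MvPolynomial.aeval
      (fun i : Fin n => MvPolynomial.esymm (Fin n) k ((i : ℕ) + 1)) Ghat = G)
    {S : Type*} [CommRing S] [Algebra k S] (lam : S)
    (f : Polynomial S) (hf : f.Monic) (hdeg : f.natDegree = n) :
    MvPolynomial.aeval
        (fun i : Fin n => (-1 : S) ^ ((i : ℕ) + 1) * f.coeff (n - ((i : ℕ) + 1))) Ghat =
      MvPolynomial.aeval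
        (fun i : Fin n => (-1 : S) ^ ((i : ℕ) + 1) *
          (f.comp (Polynomial.X + Polynomial.C lam)).coeff (n - ((i : ℕ) + 1))) Ghat :=
  diff_invariant_coeff_evaluation_general G hGdiff Ghat hrep lam f hf hdeg
end
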